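/- For every natural number k, the prefix of length 2^k of the Thue–Morse word (i.e., the iterate of order k of the L-system) is a primitive word: it is not equal to w^m for any word w and any integer m ≥ 2. -/

import Mathlib

/-!
A square or higher power `w ^ m` has period `|w|`, and `|w|` divides its length. For the
Thue–Morse prefix of length `2 ^ k` this forces `|w| = 2 ^ j` with `2 ^ j < 2 ^ k`, but
`t 0 = 0` while `t (2 ^ j) = 1`, so the prefix does not have period `2 ^ j`.
-/

open Fin.NatCast in
/-- The Thue–Morse sequence: `t n` is the parity of the number of `1` digits
in the binary expansion of `n` (so `t 0 = 0`, `t (2n) = t n`, `t (2n+1) = 1 - t n`). -/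
def thueMorse (n : ℕ) : Fin 2 := ((Nat.digits 2 n).sum : Fin 2)

theorem thueMorse_zero : thueMorse 0 = 0 := by
  simp [thueMorse]

theorem thueMorse_two_mul (n : ℕ) : thueMorse (2 * n) = thueMorse n := by
  rcases Nat.eq_zero_or_pos n with rfl | hn
  · rfl
  · simp [thueMorse, Nat.digits_def' one_lt_two (by positivity : 0 < 2 * n)]

theorem thueMorse_two_pow (j : ℕ) : thueMorse (2 ^ j) = 1 := by
  induction j with
  | zero => simp [thueMorse]
  | succ j ih => rw [pow_succ', thueMorse_two_mul, ih]

theorem List.getElem?_flatten_replicate_length {α : Type*} (w : List α) {m : ℕ} (hm : 2 ≤ m) :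
    (replicate m w).flatten[w.length]? = (replicate m w).flatten[0]? := by
  obtain ⟨n, rfl⟩ := Nat.exists_eq_add_of_le' hm
  cases w with
  | nil => rfl
  | cons a w => simp [replicate_succ, flatten_cons]

/-- For every `k`, the prefix of length `2^k` of the Thue–Morse word (the
iterate of order `k` of the L-system) is a primitive word: it is not equal to
`w^m` (the `m`-fold concatenation of `w`) for any word `w` and any `m ≥ 2`. -/
theorem thueMorse_prefix_primitive (k : ℕ) (w : List (Fin 2)) (m : ℕ) (hm : 2 ≤ m) :
    (List.ofFn fun i : Fin (2 ^ k) => thueMorse i) ≠ (List.replicate m w).flatten := by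
  intro h
  have hlen : 2 ^ k = m * w.length := by simpa using congrArg List.length h
  have hw : 0 < w.length := Nat.pos_of_ne_zero fun h0 => by simp [h0] at hlen
  have hlt : w.length < 2 ^ k := by rw [hlen]; nlinarith
  obtain ⟨j, -, hj⟩ := (Nat.dvd_prime_pow Nat.prime_two).1 (Dvd.intro_left m hlen.symm)
  have hperiod := List.getElem?_flatten_replicate_length w hm
  rw [← h, hj, List.getElem?_ofFn, List.getElem?_ofFn] at hperiod
  rw [hj] at hlt
  simp [hlt, thueMorse_two_pow, thueMorse_zero] at hperiod
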